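/- arXiv:1906.02892 — 5 statements merged into one kernel-verified Lean document; each statement's English description precedes it below -/
import Mathlib

section
/- Let B be an abelian group fitting in a short exact sequence 0 → Z/2Z → B → Z/2Z × Z/2Z × Z/2Z → 0, and suppose B contains an element of order 4. Then B is isomorphic to Z/4Z × Z/2Z × Z/2Z. -/
/-!
Since `β` kills `2 • B` and `2 • b ≠ 0`, exactness forces `ker β = {0, 2 • b}`, so `2 • y ∈ {0, 2 • b}`
for every `y`. Choose `ρ : (ℤ/2)³ → (ℤ/2)²` with kernel `{0, β b}`; then `π = ρ ∘ β` has kernel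
`⟨b⟩ ≅ ℤ/4`. A lift `y` of a point of `(ℤ/2)²` with `2 • y = 2 • b` can be replaced by `y - b`, so
every point has a lift of order at most `2`; hence `π` has a section and `B ≅ ⟨b⟩ × (ℤ/2)²`.
-/

open AddSubgroup

theorem AddMonoidHom.nonempty_addEquiv_ker_prod {B C : Type*} [AddCommGroup B] [AddCommGroup C]
    (π : B →+ C) (s : C →+ B) (hs : π.comp s = .id C) : Nonempty (B ≃+ π.ker × C) :=
  ⟨((LinearMap.exact_subtype_ker_map π.toIntLinearMap).splitSurjectiveEquiv
    (Submodule.injective_subtype _)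
    ⟨s.toIntLinearMap, LinearMap.ext fun c => DFunLike.congr_fun hs c⟩).1.toAddEquiv⟩

theorem nonempty_zmultiples_addEquiv_zmod {G : Type*} [AddGroup G] {g : G} {n : ℕ}
    (hg : addOrderOf g = n) : Nonempty (zmultiples g ≃+ ZMod n) := by
  rw [← hg, ← Nat.card_zmultiples]
  exact ⟨(zmodAddCyclicAddEquiv (isAddCyclic_zmultiples g)).symm⟩

theorem exists_linearEquiv_apply_eq {K V : Type*} [Field K] [AddCommGroup V] [Module K V]
    {v w : V} (hv : v ≠ 0) (hw : w ≠ 0) : ∃ e : V ≃ₗ[K] V, e v = w := by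
  obtain ⟨e, he⟩ := Submodule.exists_linearEquiv_restrict_eq
    (LinearEquiv.coord K V v hv ≪≫ₗ LinearEquiv.toSpanNonzeroSingleton K V w hw)
  refine ⟨e, ?_⟩
  simpa [LinearEquiv.coord_self] using (he ⟨v, Submodule.mem_span_singleton_self v⟩).symm

section

variable {B C : Type*} [AddCommGroup B] [AddCommGroup C]

theorem AddMonoidHom.exists_comp_eq_of_torsion_lifts {n : ℕ} (π : B →+ C)
    (hπ : ∀ c, ∃ x, n • x = 0 ∧ π x = c) (f : ZMod n →+ C) :
    ∃ g : ZMod n →+ B, π.comp g = f := by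
  obtain ⟨x, hx, hπx⟩ := hπ (f 1)
  refine ⟨ZMod.lift n ⟨zmultiplesHom B x, by simpa using hx⟩, ?_⟩
  ext u
  obtain ⟨m, rfl⟩ := ZMod.intCast_surjective u
  simp only [ZMod.lift_coe, zmultiplesHom_apply, AddMonoidHom.coe_comp, Function.comp_apply]
  rw [map_zsmul, hπx, ← map_zsmul, zsmul_one]

theorem AddMonoidHom.exists_comp_eq_id_of_torsion_lifts {n : ℕ} (π : B →+ ZMod n × ZMod n)
    (hπ : ∀ c, ∃ x, n • x = 0 ∧ π x = c) : ∃ s : ZMod n × ZMod n →+ B, π.comp s = .id _ := by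
  obtain ⟨g₁, hg₁⟩ := π.exists_comp_eq_of_torsion_lifts hπ (.inl _ _)
  obtain ⟨g₂, hg₂⟩ := π.exists_comp_eq_of_torsion_lifts hπ (.inr _ _)
  exact ⟨g₁.coprod g₂, by rw [AddMonoidHom.comp_coprod, hg₁, hg₂, AddMonoidHom.coprod_inl_inr]⟩

theorem exists_two_nsmul_eq_zero_and_apply_eq (π : B →+ C) (hπ : Function.Surjective π)
    {b : B} (hπb : π b = 0) (h2 : ∀ y : B, 2 • y = 0 ∨ 2 • y = 2 • b) (c : C) :
    ∃ x, 2 • x = 0 ∧ π x = c := by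
  obtain ⟨y, rfl⟩ := hπ c
  rcases h2 y with h | h
  · exact ⟨y, h, rfl⟩
  · exact ⟨y - b, by rw [nsmul_sub, h, sub_self], by rw [map_sub, hπb, sub_zero]⟩

theorem AddMonoidHom.ker_comp_eq_zmultiples {V W : Type*} [AddCommGroup V] [AddCommGroup W]
    (β : B →+ V) (ρ : V →+ W) {b : B} (hβ : β.ker ≤ zmultiples b)
    (hρ : ∀ v, ρ v = 0 ↔ v = 0 ∨ v = β b) : (ρ.comp β).ker = zmultiples b := by
  refine le_antisymm (fun z hz => ?_) (zmultiples_le.2 (by simp [hρ]))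
  rcases (hρ (β z)).1 hz with h | h
  · exact hβ h
  · have : z - b ∈ zmultiples b := hβ (by simp [h])
    simpa using add_mem this (mem_zmultiples b)

theorem apply_eq_zero_iff_eq_zero_or_eq_two_nsmul {V : Type*} [AddCommGroup V]
    (α : ZMod 2 →+ B) (β : B →+ V) (hexact : α.range = β.ker) (hV : ∀ v : V, 2 • v = 0)
    {b : B} (hb : addOrderOf b = 4) (z : B) : β z = 0 ↔ z = 0 ∨ z = 2 • b := by
  have h2b : 2 • b ≠ 0 := fun h => by simpa [hb] using addOrderOf_dvd_of_nsmul_eq_zero h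
  obtain ⟨w, hw⟩ : 2 • b ∈ α.range := by rw [hexact, AddMonoidHom.mem_ker, map_nsmul, hV]
  rw [← AddMonoidHom.mem_ker, ← hexact]
  constructor
  · rintro ⟨u, rfl⟩
    have key : ∀ u w : ZMod 2, u = 0 ∨ u = w ∨ w = 0 := by decide
    rcases key u w with rfl | rfl | rfl
    · simp
    · exact Or.inr hw
    · exact absurd (by simpa using hw.symm) h2b
  · rintro (rfl | rfl)
    exacts [zero_mem _, ⟨w, hw⟩]

theorem nonempty_addEquiv_zmod_four_prod (π : B →+ ZMod 2 × ZMod 2)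
    (hπ : Function.Surjective π) {b : B} (hb : addOrderOf b = 4) (hker : π.ker = zmultiples b)
    (h2 : ∀ y : B, 2 • y = 0 ∨ 2 • y = 2 • b) :
    Nonempty (B ≃+ ZMod 4 × ZMod 2 × ZMod 2) := by
  have hπb : π b = 0 := (hker ▸ mem_zmultiples b : b ∈ π.ker)
  obtain ⟨s, hs⟩ := π.exists_comp_eq_id_of_torsion_lifts
    (exists_two_nsmul_eq_zero_and_apply_eq π hπ hπb h2)
  obtain ⟨e⟩ := π.nonempty_addEquiv_ker_prod s hs
  obtain ⟨f⟩ := nonempty_zmultiples_addEquiv_zmod hb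
  exact ⟨e.trans (((AddEquiv.addSubgroupCongr hker).trans f).prodCongr (.refl _))⟩

end

theorem exists_surjective_ker_eq_pair {g : ZMod 2 × ZMod 2 × ZMod 2} (hg : g ≠ 0) :
    ∃ ρ : ZMod 2 × ZMod 2 × ZMod 2 →+ ZMod 2 × ZMod 2,
      Function.Surjective ρ ∧ ∀ v, ρ v = 0 ↔ v = 0 ∨ v = g := by
  obtain ⟨e, he⟩ := exists_linearEquiv_apply_eq (K := ZMod 2) hg (w := (1, 0, 0)) (by decide)
  refine ⟨(AddMonoidHom.snd _ _).comp e.toAddMonoidHom, Prod.snd_surjective.comp e.surjective,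
    fun v => ?_⟩
  have key : ∀ u : ZMod 2 × ZMod 2 × ZMod 2, u.2 = 0 ↔ u = 0 ∨ u = (1, 0, 0) := by decide
  simpa [← he, e.injective.eq_iff] using key (e v)

theorem extension_with_order_four_element_general
    {B : Type*} [AddCommGroup B]
    (α : ZMod 2 →+ B) (β : B →+ ZMod 2 × ZMod 2 × ZMod 2)
    (hβ : Function.Surjective β)
    (hexact : α.range = β.ker)
    (b : B) (hb : addOrderOf b = 4) :
    Nonempty (B ≃+ (ZMod 4 × ZMod 2 × ZMod 2)) := by
  have hV : ∀ v : ZMod 2 × ZMod 2 × ZMod 2, 2 • v = 0 := by decide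
  have hker := apply_eq_zero_iff_eq_zero_or_eq_two_nsmul α β hexact hV hb
  have hβb : β b ≠ 0 := fun h => by
    rcases (hker b).1 h with h | h
    · simp [h] at hb
    · rw [two_nsmul, left_eq_add] at h
      simp [h] at hb
  obtain ⟨ρ, hρ, hρker⟩ := exists_surjective_ker_eq_pair hβb
  refine nonempty_addEquiv_zmod_four_prod (ρ.comp β) (hρ.comp hβ) hb
    (AddMonoidHom.ker_comp_eq_zmultiples β ρ (fun z hz => ?_) hρker)
    (fun y => (hker _).1 (by simp [hV]))
  rcases (hker z).1 hz with rfl | rfl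
  exacts [zero_mem _, nsmul_mem (mem_zmultiples b) 2]

/-- If an abelian group `B` fits in a short exact sequence
`0 → ℤ/2ℤ → B → ℤ/2ℤ × ℤ/2ℤ × ℤ/2ℤ → 0` and contains an element of order `4`,
then `B` is isomorphic to `ℤ/4ℤ × ℤ/2ℤ × ℤ/2ℤ`. -/
theorem extension_with_order_four_element
    {B : Type*} [AddCommGroup B]
    (α : ZMod 2 →+ B) (β : B →+ ZMod 2 × ZMod 2 × ZMod 2)
    (hα : Function.Injective α) (hβ : Function.Surjective β)
    (hexact : α.range = β.ker)
    (b : B) (hb : addOrderOf b = 4) :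
    Nonempty (B ≃+ (ZMod 4 × ZMod 2 × ZMod 2)) :=
  extension_with_order_four_element_general α β hβ hexact b hb
end

section
/- Define α : Z → Z × (Z/2Z)³ by α(n) = (2n, 0, 0, 0), and β : Z × (Z/2Z)³ → (Z/2Z)⁴ by β(a, b, c, d) = (c, ā + b, d, b), where ā denotes the reduction of a modulo 2. Then the sequence 0 → Z →^α Z × (Z/2Z)³ →^β (Z/2Z)⁴ → 0 is exact: α is injective, β is surjective, and the image of α equals the kernel of β. -/
/-- The map `α : ℤ → ℤ × (ℤ/2ℤ)³`, `n ↦ (2n, 0, 0, 0)`. -/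
def alphaMap (n : ℤ) : ℤ × ZMod 2 × ZMod 2 × ZMod 2 := (2 * n, 0, 0, 0)

/-- The map `β : ℤ × (ℤ/2ℤ)³ → (ℤ/2ℤ)⁴`,
`(a, b, c, d) ↦ (c, ā + b, d, b)`, where `ā` is `a` reduced mod `2`. -/
def betaMap (p : ℤ × ZMod 2 × ZMod 2 × ZMod 2) :
    ZMod 2 × ZMod 2 × ZMod 2 × ZMod 2 :=
  (p.2.2.1, (p.1 : ZMod 2) + p.2.1, p.2.2.2, p.2.1)

theorem alphaMap_injective : Function.Injective alphaMap := fun m n h => by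
  have h2 : 2 * m = 2 * n := congrArg Prod.fst h
  omega

theorem betaMap_surjective : Function.Surjective betaMap := by
  rintro ⟨w, x, y, z⟩
  refine ⟨((x - z).val, z, w, y), ?_⟩
  simp [betaMap]

theorem betaMap_eq_zero_iff (p : ℤ × ZMod 2 × ZMod 2 × ZMod 2) :
    betaMap p = 0 ↔ (p.1 : ZMod 2) = 0 ∧ p.2 = 0 := by
  obtain ⟨a, b, c, d⟩ := p
  simp only [betaMap, Prod.ext_iff, Prod.fst_zero, Prod.snd_zero]
  constructor <;> rintro ⟨h₁, h₂, h₃, h₄⟩ <;> simp_all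

theorem range_alphaMap : Set.range alphaMap = {p | betaMap p = 0} := by
  ext ⟨a, q⟩
  rw [Set.mem_ofPred_eq, betaMap_eq_zero_iff, ZMod.intCast_zmod_eq_zero_iff_dvd]
  simp [alphaMap, dvd_def, eq_comm, Prod.mk_zero_zero]

/-- The sequence `0 → ℤ →α ℤ × (ℤ/2ℤ)³ →β (ℤ/2ℤ)⁴ → 0` is exact: `α` is
injective, `β` is surjective, and the image of `α` equals the kernel of `β`. -/
theorem alpha_beta_exact :
    Function.Injective alphaMap ∧ Function.Surjective betaMap ∧
      Set.range alphaMap = {p | betaMap p = 0} :=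
  ⟨alphaMap_injective, betaMap_surjective, range_alphaMap⟩
end

section
/- Let G = Z ⋊ Z/2Z be the infinite dihedral group, with the Z/2Z generator r acting on Z by negation, and let φ : G → {±1} be the homomorphism that is trivial on Z and sends r to −1. Then the group of crossed homomorphisms ν : G → Z satisfying ν(gh) = ν(g) + φ(g)ν(h), modulo principal crossed homomorphisms g ↦ φ(g)c − c, is isomorphic to Z × Z/2Z. -/
/-- The abelian group of crossed homomorphisms `ν : G → ℤ` with respect to a
twist `φ : G → ℤ`: `ν (g * h) = ν g + φ g * ν h`. -/
def crossedHoms (G : Type*) [Group G] (φ : G → ℤ) : AddSubgroup (G → ℤ) where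
  carrier := {ν | ∀ g h : G, ν (g * h) = ν g + φ g * ν h}
  zero_mem' := by intro g h; simp
  add_mem' := by
    intro a b ha hb g h
    simp only [Pi.add_apply, ha g h, hb g h]; ring
  neg_mem' := by
    intro a ha g h
    simp only [Pi.neg_apply, ha g h]; ring

/-- The subgroup of principal crossed homomorphisms `g ↦ φ g * c - c`. -/
def principalCrossedHoms (G : Type*) [Group G] (φ : G → ℤ) :
    AddSubgroup (G → ℤ) where
  carrier := {ν | ∃ c : ℤ, ∀ g : G, ν g = φ g * c - c}
  zero_mem' := ⟨0, by intro g; simp⟩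
  add_mem' := by
    rintro a b ⟨c, hc⟩ ⟨d, hd⟩
    exact ⟨c + d, by intro g; simp [hc g, hd g]; ring⟩
  neg_mem' := by
    rintro a ⟨c, hc⟩
    exact ⟨-c, by intro g; simp [hc g]; ring⟩

/-- The infinite dihedral group `ℤ ⋊ ℤ/2ℤ`: the dihedral group over
`ZMod 0 = ℤ`, generated by a translation `t` and a reflection `r` with
`r² = 1` and `r t r = t⁻¹` (the reflection acting on `ℤ` by negation). -/
abbrev InfDihedral := DihedralGroup 0

/-- The twist `φ : ℤ ⋊ ℤ/2ℤ → {±1}` that is trivial on the translations and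
sends the reflections to `-1`. -/
def phiDihedral : InfDihedral → ℤ
  | DihedralGroup.r _ => 1
  | DihedralGroup.sr _ => -1

/-! A crossed homomorphism `ν` is additive on the translations `r i`, where `φ = 1`, so it is
determined by `a = ν (r 1)` and `b = ν (sr 0)`, and every pair `(a, b)` occurs. A principal one
`g ↦ φ g * c - c` has `a = 0` and `b = -2c`, so `ν ↦ (a, b mod 2)` induces `H¹ ≅ ℤ × ℤ/2ℤ`. -/

lemma crossedHoms_apply_zpow {G : Type*} [Group G] {φ : G → ℤ} {ν : G → ℤ}
    (hν : ν ∈ crossedHoms G φ) {x : G} (hx : ∀ k : ℤ, φ (x ^ k) = 1) (k : ℤ) :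
    ν (x ^ k) = k * ν x := by
  let f : ℤ →+ ℤ := AddMonoidHom.mk' (fun k => ν (x ^ k)) fun a b => by
    simp only [zpow_add, hν _ _, hx, one_mul]
  simpa [f] using AddMonoidHom.apply_int _ f k

namespace InfDihedral

open DihedralGroup

variable {ν : InfDihedral → ℤ}

-- `ZMod 0` is `ℤ`, and `ZMod.cast` is the identity on it.
lemma crossedHoms_apply_r (hν : ν ∈ crossedHoms InfDihedral phiDihedral) (i : ZMod 0) :
    ν (r i) = i.cast * ν (r 1) := by
  obtain ⟨k, rfl⟩ := ZMod.intCast_surjective i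
  rw [← r_one_zpow, crossedHoms_apply_zpow hν (by simp [phiDihedral]),
    ZMod.cast_intCast', Int.cast_id]

lemma crossedHoms_apply_sr (hν : ν ∈ crossedHoms InfDihedral phiDihedral) (i : ZMod 0) :
    ν (sr i) = ν (sr 0) - i.cast * ν (r 1) := by
  have h := hν (sr 0) (r i)
  rw [sr_mul_r, zero_add] at h
  rw [h, crossedHoms_apply_r hν]
  simp only [phiDihedral]
  ring

def crossedHomOfGens (a b : ℤ) : crossedHoms InfDihedral phiDihedral :=
  ⟨fun | r i => i.cast * a | sr i => b - i.cast * a, by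
    rintro (i | i) (j | j) <;>
      obtain ⟨i, rfl⟩ := ZMod.intCast_surjective i <;>
      obtain ⟨j, rfl⟩ := ZMod.intCast_surjective j <;>
      simp [phiDihedral] <;> ring⟩

lemma mem_principalCrossedHoms_iff (hν : ν ∈ crossedHoms InfDihedral phiDihedral) :
    ν ∈ principalCrossedHoms InfDihedral phiDihedral ↔ ν (r 1) = 0 ∧ 2 ∣ ν (sr 0) := by
  constructor
  · rintro ⟨c, hc⟩
    simp only [hc, phiDihedral]
    exact ⟨by ring, ⟨-c, by ring⟩⟩
  · rintro ⟨h1, k, hk⟩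
    refine ⟨-k, ?_⟩
    rintro (i | i)
    · rw [crossedHoms_apply_r hν, h1]
      simp only [phiDihedral]
      ring
    · rw [crossedHoms_apply_sr hν, h1, hk]
      simp only [phiDihedral]
      ring

/-- The class of `ν` in `H¹`: its value on the translation `r 1`, and its value on the
reflection `sr 0` modulo `2`. -/
def evalGens : crossedHoms InfDihedral phiDihedral →+ ℤ × ZMod 2 :=
  ((AddMonoidHom.id ℤ).prodMap (Int.castAddHom (ZMod 2))).comp
    (((Pi.evalAddMonoidHom (fun _ => ℤ) (r 1)).prod
      (Pi.evalAddMonoidHom (fun _ => ℤ) (sr 0))).comp (crossedHoms _ _).subtype)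

lemma evalGens_surjective : Function.Surjective evalGens := by
  rintro ⟨a, b⟩
  obtain ⟨b, rfl⟩ := ZMod.intCast_surjective b
  exact ⟨crossedHomOfGens a b, by simp [evalGens, crossedHomOfGens]⟩

lemma ker_evalGens :
    evalGens.ker = (principalCrossedHoms InfDihedral phiDihedral).addSubgroupOf
      (crossedHoms InfDihedral phiDihedral) := by
  ext ν
  rw [AddSubgroup.mem_addSubgroupOf, mem_principalCrossedHoms_iff ν.2,
    AddMonoidHom.mem_ker]
  simp [evalGens, Prod.ext_iff, ZMod.intCast_zmod_eq_zero_iff_dvd]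

end InfDihedral

/-- For the infinite dihedral group `G = ℤ ⋊ ℤ/2ℤ` with twist `φ` trivial on
`ℤ` and sending the reflection to `-1`, the group of crossed homomorphisms
`ν : G → ℤ` modulo principal crossed homomorphisms is isomorphic to
`ℤ × ℤ/2ℤ`. -/
theorem twisted_H1_of_infDihedral :
    Nonempty
      ((crossedHoms InfDihedral phiDihedral ⧸
          (principalCrossedHoms InfDihedral phiDihedral).addSubgroupOf
            (crossedHoms InfDihedral phiDihedral))
        ≃+ ℤ × ZMod 2) :=
  ⟨(QuotientAddGroup.quotientAddEquivOfEq InfDihedral.ker_evalGens.symm).trans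
    (QuotientAddGroup.quotientKerEquivOfSurjective _ InfDihedral.evalGens_surjective)⟩
end

section
/- Let G = Z³ ⋊ Z/2Z, where the generator r of Z/2Z acts on Z³ by negation, and let φ : G → {±1} be trivial on Z³ and send r to −1. Then the quotient of the group of crossed homomorphisms ν : G → Z (satisfying ν(gh) = ν(g) + φ(g)ν(h), where Z is a G-module via φ) by the subgroup of principal crossed homomorphisms g ↦ φ(g)c − c is isomorphic to Z³ × Z/2Z. -/
/-- The inversion (negation) automorphism of `ℤ³`, written multiplicatively. -/
def negAut : MulAut (Multiplicative (ℤ × ℤ × ℤ)) := MulEquiv.inv _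

/-- The action of `ℤ/2ℤ` on `ℤ³` in which the generator acts by negation. -/
def thetaAction :
    Multiplicative (ZMod 2) →* MulAut (Multiplicative (ℤ × ℤ × ℤ)) where
  toFun g := if Multiplicative.toAdd g = 0 then 1 else negAut
  map_one' := by simp
  map_mul' := by
    intro a b
    have hsq : negAut * negAut = 1 := by
      ext x <;>
      simp [negAut]
    have h2 : ∀ x : ZMod 2, x = 0 ∨ x = 1 := by decide
    rcases h2 (Multiplicative.toAdd a) with ha | ha <;>
      rcases h2 (Multiplicative.toAdd b) with hb | hb <;>
        simp [toAdd_mul, ha, hb, hsq, show (1 : ZMod 2) + 1 = 0 by decide]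

/-- The group `ℤ³ ⋊ ℤ/2ℤ`, where the generator of `ℤ/2ℤ` acts on `ℤ³` by
negation.  This is the abstract group of the space group `P-1`. -/
abbrev PBarOne := Multiplicative (ℤ × ℤ × ℤ) ⋊[thetaAction] Multiplicative (ZMod 2)

/-- The twist `φ : ℤ³ ⋊ ℤ/2ℤ → {±1}`, trivial on `ℤ³` and sending the
inversion `r` to `-1`. -/
def phiPBarOne : PBarOne → ℤ := fun g =>
  if Multiplicative.toAdd g.right = 0 then 1 else -1

/-! On the translations the twist is trivial, so a crossed homomorphism restricts to an ordinary
homomorphism `ℤ³ → ℤ`, i.e. a vector `m`; since `g = inl g.left * inr g.right`, it is determined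
by `m` and its value `c` on the inversion, and every pair occurs, as
`g ↦ ⟨m, g.left⟩ + c · parity g`. Thus the crossed homomorphisms form `ℤ³ × ℤ`, while the
principal ones, `g ↦ φ g * c - c = -2c · parity g`, form `0 × 2ℤ`. -/

open Multiplicative SemidirectProduct

section CrossedHoms

variable {G : Type*} [Group G] {φ : G → ℤ} {ν : G → ℤ}

theorem crossedHoms.map_mul_of_twist_eq_one (hν : ν ∈ crossedHoms G φ) {g : G} (hg : φ g = 1)
    (h : G) : ν (g * h) = ν g + ν h := by
  rw [hν g h, hg, one_mul]

theorem crossedHoms.map_one (hν : ν ∈ crossedHoms G φ) (hφ : φ 1 = 1) : ν 1 = 0 := by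
  have h := crossedHoms.map_mul_of_twist_eq_one hν hφ 1
  rw [one_mul] at h
  linarith

theorem crossedHoms.apply_eq_inl_add_inr {N H : Type*} [Group N] [Group H] {θ : H →* MulAut N}
    {φ ν : N ⋊[θ] H → ℤ} (hν : ν ∈ crossedHoms _ φ) (hφ : ∀ n, φ (inl n) = 1)
    (g : N ⋊[θ] H) : ν g = ν (inl g.left) + ν (inr g.right) := by
  conv_lhs => rw [← inl_left_mul_inr_right g]
  exact crossedHoms.map_mul_of_twist_eq_one hν (hφ _) _

end CrossedHoms

def tripleDot (m : ℤ × ℤ × ℤ) : ℤ × ℤ × ℤ →+ ℤ :=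
  AddMonoidHom.mk' (fun x => m.1 * x.1 + m.2.1 * x.2.1 + m.2.2 * x.2.2) fun x y => by
    simp only [Prod.fst_add, Prod.snd_add]; ring

theorem AddMonoidHom.eq_tripleDot (f : ℤ × ℤ × ℤ →+ ℤ) :
    f = tripleDot (f (1, 0, 0), f (0, 1, 0), f (0, 0, 1)) := by
  ext x
  have hx : x = x.1 • ((1, 0, 0) : ℤ × ℤ × ℤ) + x.2.1 • (0, 1, 0) + x.2.2 • (0, 0, 1) := by
    simp
  conv_lhs => rw [hx]
  simp only [map_add, map_zsmul, smul_eq_mul, tripleDot, AddMonoidHom.mk'_apply]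
  ring

namespace PBarOne

theorem toAdd_thetaAction (t : Multiplicative (ZMod 2)) (x : Multiplicative (ℤ × ℤ × ℤ)) :
    toAdd (thetaAction t x) = (if toAdd t = 0 then 1 else -1 : ℤ) • toAdd x := by
  change toAdd ((if toAdd t = 0 then 1 else negAut : MulAut _) x) = _
  split_ifs <;> simp [negAut]

theorem phiPBarOne_inl (x : Multiplicative (ℤ × ℤ × ℤ)) : phiPBarOne (inl x) = 1 := by
  simp [phiPBarOne]

def parity (g : PBarOne) : ℤ := (toAdd g.right).val

theorem parity_inr_ofAdd_one : parity (inr (ofAdd 1)) = 1 := rfl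

theorem phiPBarOne_eq_one_sub_two_mul_parity (g : PBarOne) :
    phiPBarOne g = 1 - 2 * parity g := by
  unfold phiPBarOne parity
  generalize toAdd g.right = t
  revert t; decide

theorem parity_mem_crossedHoms : parity ∈ crossedHoms PBarOne phiPBarOne := by
  intro g h
  simp only [phiPBarOne_eq_one_sub_two_mul_parity, parity, mul_right, toAdd_mul]
  generalize toAdd g.right = a
  generalize toAdd h.right = b
  revert a b; decide

theorem comp_left_mem_crossedHoms (f : ℤ × ℤ × ℤ →+ ℤ) :
    (fun g : PBarOne => f (toAdd g.left)) ∈ crossedHoms PBarOne phiPBarOne := by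
  intro g h
  simp only [mul_left, toAdd_mul, toAdd_thetaAction, map_add, map_zsmul, smul_eq_mul, phiPBarOne]

def crossedHomOf (m : ℤ × ℤ × ℤ) (c : ℤ) (g : PBarOne) : ℤ :=
  tripleDot m (toAdd g.left) + c * parity g

theorem crossedHomOf_mem_crossedHoms (m : ℤ × ℤ × ℤ) (c : ℤ) :
    crossedHomOf m c ∈ crossedHoms PBarOne phiPBarOne :=
  add_mem (comp_left_mem_crossedHoms _) (zsmul_mem parity_mem_crossedHoms c)

def translationValues (ν : PBarOne → ℤ) : ℤ × ℤ × ℤ :=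
  (ν (inl (ofAdd (1, 0, 0))), ν (inl (ofAdd (0, 1, 0))), ν (inl (ofAdd (0, 0, 1))))

theorem translationValues_crossedHomOf (m : ℤ × ℤ × ℤ) (c : ℤ) :
    translationValues (crossedHomOf m c) = m := by
  simp [translationValues, crossedHomOf, tripleDot, parity]

theorem crossedHomOf_inr (m : ℤ × ℤ × ℤ) (c : ℤ) : crossedHomOf m c (inr (ofAdd 1)) = c := by
  rw [crossedHomOf, parity_inr_ofAdd_one, mul_one, left_inr, toAdd_one, map_zero, zero_add]

theorem eq_crossedHomOf {ν : PBarOne → ℤ} (hν : ν ∈ crossedHoms PBarOne phiPBarOne) :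
    ν = crossedHomOf (translationValues ν) (ν (inr (ofAdd 1))) := by
  let f : ℤ × ℤ × ℤ →+ ℤ := AddMonoidHom.mk' (fun x => ν (inl (ofAdd x))) fun x y => by
    simpa using crossedHoms.map_mul_of_twist_eq_one hν (phiPBarOne_inl (ofAdd x)) (inl (ofAdd y))
  have hinr (t : Multiplicative (ZMod 2)) : ν (inr t) = ν (inr (ofAdd 1)) * parity (inr t) := by
    rcases (by decide : ∀ a : ZMod 2, a = 0 ∨ a = 1) (toAdd t) with ht | ht
    · rw [show t = 1 from ht, map_one, crossedHoms.map_one hν (by simp [phiPBarOne])]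
      simp [parity]
    · rw [show t = ofAdd 1 from ht, parity_inr_ofAdd_one, mul_one]
  funext g
  rw [crossedHoms.apply_eq_inl_add_inr hν phiPBarOne_inl g, hinr, crossedHomOf]
  congr 1
  exact DFunLike.congr_fun f.eq_tripleDot (toAdd g.left)

theorem principal_eq_crossedHomOf (c : ℤ) (g : PBarOne) :
    phiPBarOne g * c - c = crossedHomOf 0 (-2 * c) g := by
  simp only [crossedHomOf, phiPBarOne_eq_one_sub_two_mul_parity, tripleDot,
    AddMonoidHom.mk'_apply, Prod.fst_zero, Prod.snd_zero]
  ring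

def invariants : crossedHoms PBarOne phiPBarOne →+ (ℤ × ℤ × ℤ) × ZMod 2 where
  toFun ν := (translationValues ν, (ν.1 (inr (ofAdd 1)) : ZMod 2))
  map_zero' := by simp [translationValues]
  map_add' ν μ := by simp [translationValues]

theorem invariants_apply (ν : crossedHoms PBarOne phiPBarOne) :
    invariants ν = (translationValues ν, (ν.1 (inr (ofAdd 1)) : ZMod 2)) := rfl

theorem invariants_surjective : Function.Surjective invariants := by
  rintro ⟨m, z⟩
  refine ⟨⟨crossedHomOf m z.val, crossedHomOf_mem_crossedHoms m z.val⟩, ?_⟩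
  rw [invariants_apply, Subtype.coe_mk, translationValues_crossedHomOf, crossedHomOf_inr,
    Int.cast_natCast, ZMod.natCast_zmod_val]

theorem principalCrossedHoms_eq_ker_invariants :
    (principalCrossedHoms PBarOne phiPBarOne).addSubgroupOf (crossedHoms PBarOne phiPBarOne) =
      invariants.ker := by
  ext ⟨ν, hν⟩
  rw [AddSubgroup.mem_addSubgroupOf, AddMonoidHom.mem_ker]
  constructor
  · rintro ⟨c, hc⟩
    obtain rfl : ν = crossedHomOf 0 (-2 * c) :=
      funext fun g => (hc g).trans (principal_eq_crossedHomOf c g)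
    rw [invariants_apply, Subtype.coe_mk, translationValues_crossedHomOf, crossedHomOf_inr,
      Prod.mk_eq_zero, ZMod.intCast_zmod_eq_zero_iff_dvd]
    exact ⟨rfl, ⟨-c, by push_cast; ring⟩⟩
  · rw [invariants_apply, Subtype.coe_mk, Prod.mk_eq_zero, ZMod.intCast_zmod_eq_zero_iff_dvd]
    rintro ⟨h0, k, hk⟩
    refine ⟨-k, fun g => ?_⟩
    rw [eq_crossedHomOf hν, h0, hk, principal_eq_crossedHomOf, neg_mul_neg, Nat.cast_ofNat]

end PBarOne

/-- For `G = ℤ³ ⋊ ℤ/2ℤ` (inversion acting by negation) with twist `φ` trivial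
on `ℤ³` and `φ(r) = -1`, the group of crossed homomorphisms `ν : G → ℤ`
modulo principal crossed homomorphisms is isomorphic to `ℤ³ × ℤ/2ℤ`. -/
theorem twisted_H1_of_PBarOne :
    Nonempty
      ((crossedHoms PBarOne phiPBarOne ⧸
          (principalCrossedHoms PBarOne phiPBarOne).addSubgroupOf
            (crossedHoms PBarOne phiPBarOne))
        ≃+ (ℤ × ℤ × ℤ) × ZMod 2) :=
  ⟨(QuotientAddGroup.quotientAddEquivOfEq PBarOne.principalCrossedHoms_eq_ker_invariants).trans
    (QuotientAddGroup.quotientKerEquivOfSurjective _ PBarOne.invariants_surjective)⟩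
end

section
/- Let V be a finite-dimensional complex inner product space, let H₀ and H₁ be self-adjoint operators on V, and suppose ψ ∈ V is a unit vector that is an eigenvector of both H₀ and H₁ with eigenvalues E₀ and E₁ respectively, such that for i = 0, 1 every other eigenvalue of H_i is at least E_i + Δ_i with Δ_i > 0 (i.e., ψ spans the ground-state eigenspace with spectral gap Δ_i). Then for every t ∈ [0,1], ψ is an eigenvector of H_t := (1−t)H₀ + tH₁ with eigenvalue (1−t)E₀ + tE₁, this is the smallest eigenvalue of H_t, and every other eigenvalue of H_t is at least (1−t)E₀ + tE₁ + (1−t)Δ₀ + tΔ₁. -/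
/-!
If `ψ` spans the `Eᵢ`-eigenspace of the symmetric operator `Hᵢ` and the rest of its spectrum lies
above `Eᵢ + Δᵢ`, then expanding a vector `v ⊥ ψ` in an eigenbasis of `Hᵢ` gives
`re ⟪v, Hᵢ v⟫ ≥ (Eᵢ + Δᵢ) ‖v‖²`. An eigenvector `v` of `H_t = (1-t) H₀ + t H₁` for an eigenvalue
`μ ≠ E_t` is orthogonal to the eigenvector `ψ`, and `μ ‖v‖² = re ⟪v, H_t v⟫` is the convex
combination of the two quadratic forms, hence `μ ≥ E_t + (1-t) Δ₀ + t Δ₁`.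
-/

open Module LinearMap Module.End RCLike
open scoped InnerProductSpace

namespace LinearMap.IsSymmetric

variable {𝕜 V : Type*} [RCLike 𝕜] [NormedAddCommGroup V] [InnerProductSpace 𝕜 V]
  [FiniteDimensional 𝕜 V] {T : Module.End 𝕜 V}

theorem re_inner_map_self_eq_sum (hT : T.IsSymmetric) (v : V) :
    re ⟪v, T v⟫_𝕜 = ∑ i, hT.eigenvalues rfl i * ‖⟪hT.eigenvectorBasis rfl i, v⟫_𝕜‖ ^ 2 := by
  rw [← (hT.eigenvectorBasis rfl).sum_inner_mul_inner, map_sum]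
  refine Finset.sum_congr rfl fun i _ => ?_
  rw [← hT, hT.apply_eigenvectorBasis, inner_smul_left, conj_ofReal, ← inner_conj_symm,
    mul_left_comm, RCLike.conj_mul, ← ofReal_pow, ← ofReal_mul, ofReal_re]

theorem mul_norm_sq_le_re_inner_map_self (hT : T.IsSymmetric) {c : ℝ} {v : V}
    (hv : ∀ (μ : ℝ) (w : V), T w = (μ : 𝕜) • w → μ < c → ⟪w, v⟫_𝕜 = 0) :
    c * ‖v‖ ^ 2 ≤ re ⟪v, T v⟫_𝕜 := by
  rw [hT.re_inner_map_self_eq_sum, ← (hT.eigenvectorBasis rfl).sum_sq_norm_inner_right v,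
    Finset.mul_sum]
  refine Finset.sum_le_sum fun i _ => ?_
  by_cases hi : hT.eigenvalues rfl i < c
  · simp [hv _ _ (hT.apply_eigenvectorBasis rfl i) hi]
  · exact mul_le_mul_of_nonneg_right (not_lt.mp hi) (sq_nonneg _)

theorem add_mul_norm_sq_le_re_inner_map_self_of_inner_eq_zero (hT : T.IsSymmetric) {ψ v : V}
    {E Δ : ℝ} (hspan : T.eigenspace (E : 𝕜) = Submodule.span 𝕜 {ψ})
    (hgap : ∀ μ : ℝ, T.HasEigenvalue (μ : 𝕜) → μ ≠ E → E + Δ ≤ μ) (hv : ⟪ψ, v⟫_𝕜 = 0) :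
    (E + Δ) * ‖v‖ ^ 2 ≤ re ⟪v, T v⟫_𝕜 := by
  refine hT.mul_norm_sq_le_re_inner_map_self fun μ w hw hμ => ?_
  obtain rfl | hw0 := eq_or_ne w 0
  · exact inner_zero_left _
  have hμE : μ = E := by_contra fun hne =>
    (hgap μ (hasEigenvalue_of_hasEigenvector ⟨mem_eigenspace_iff.mpr hw, hw0⟩) hne).not_gt hμ
  subst hμE
  obtain ⟨a, rfl⟩ := Submodule.mem_span_singleton.mp (hspan ▸ mem_eigenspace_iff.mpr hw)
  rw [inner_smul_left, hv, mul_zero]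

end LinearMap.IsSymmetric

section Interpolation

variable {𝕜 V : Type*} [RCLike 𝕜] [NormedAddCommGroup V] [InnerProductSpace 𝕜 V]
  {H₀ H₁ : Module.End 𝕜 V} {ψ : V} {E₀ E₁ : ℝ}

theorem apply_eq_smul_of_eigenspace_eq_span {T : Module.End 𝕜 V} {E : 𝕜}
    (hspan : T.eigenspace E = Submodule.span 𝕜 {ψ}) : T ψ = E • ψ :=
  mem_eigenspace_iff.mp (hspan ▸ Submodule.mem_span_singleton_self ψ)

theorem add_smul_apply_eq_smul_of_apply_eq_smul (heig₀ : H₀ ψ = (E₀ : 𝕜) • ψ)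
    (heig₁ : H₁ ψ = (E₁ : 𝕜) • ψ) (a b : ℝ) :
    ((a : 𝕜) • H₀ + (b : 𝕜) • H₁) ψ = ((a * E₀ + b * E₁ : ℝ) : 𝕜) • ψ := by
  simp only [LinearMap.add_apply, LinearMap.smul_apply, heig₀, heig₁, smul_smul, ← add_smul]
  push_cast
  rfl

theorem isSymmetric_ofReal_smul_add (hH₀ : H₀.IsSymmetric) (hH₁ : H₁.IsSymmetric) (a b : ℝ) :
    ((a : 𝕜) • H₀ + (b : 𝕜) • H₁).IsSymmetric :=
  (hH₀.smul (conj_ofReal a)).add (hH₁.smul (conj_ofReal b))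

variable [FiniteDimensional 𝕜 V] {Δ₀ Δ₁ : ℝ}

theorem add_le_of_hasEigenvalue_ofReal_smul_add (hH₀ : H₀.IsSymmetric) (hH₁ : H₁.IsSymmetric)
    (hspan₀ : H₀.eigenspace (E₀ : 𝕜) = Submodule.span 𝕜 {ψ})
    (hspan₁ : H₁.eigenspace (E₁ : 𝕜) = Submodule.span 𝕜 {ψ})
    (hgap₀ : ∀ μ : ℝ, H₀.HasEigenvalue (μ : 𝕜) → μ ≠ E₀ → E₀ + Δ₀ ≤ μ)
    (hgap₁ : ∀ μ : ℝ, H₁.HasEigenvalue (μ : 𝕜) → μ ≠ E₁ → E₁ + Δ₁ ≤ μ)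
    {a b : ℝ} (ha : 0 ≤ a) (hb : 0 ≤ b) {μ : ℝ}
    (hμ : ((a : 𝕜) • H₀ + (b : 𝕜) • H₁).HasEigenvalue (μ : 𝕜)) (hne : μ ≠ a * E₀ + b * E₁) :
    a * E₀ + b * E₁ + (a * Δ₀ + b * Δ₁) ≤ μ := by
  set H := (a : 𝕜) • H₀ + (b : 𝕜) • H₁
  obtain ⟨v, hv, hv0⟩ := hμ.exists_hasEigenvector
  have hψ : H ψ = ((a * E₀ + b * E₁ : ℝ) : 𝕜) • ψ :=
    add_smul_apply_eq_smul_of_apply_eq_smul (apply_eq_smul_of_eigenspace_eq_span hspan₀)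
      (apply_eq_smul_of_eigenspace_eq_span hspan₁) a b
  have hψv : ⟪ψ, v⟫_𝕜 = 0 :=
    (isSymmetric_ofReal_smul_add hH₀ hH₁ a b).orthogonalFamily_eigenspaces
      (fun h => hne (ofReal_injective h).symm) ⟨ψ, mem_eigenspace_iff.mpr hψ⟩ ⟨v, hv⟩
  have hRayleigh : re ⟪v, H v⟫_𝕜 = μ * ‖v‖ ^ 2 := by
    rw [inner_product_apply_eigenvector (mem_eigenspace_iff.mp hv)]
    norm_cast
  have hsplit : re ⟪v, H v⟫_𝕜 = a * re ⟪v, H₀ v⟫_𝕜 + b * re ⟪v, H₁ v⟫_𝕜 := by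
    simp only [H, LinearMap.add_apply, LinearMap.smul_apply, inner_add_right, inner_smul_right,
      map_add, re_ofReal_mul]
  have h₀ := hH₀.add_mul_norm_sq_le_re_inner_map_self_of_inner_eq_zero hspan₀ hgap₀ hψv
  have h₁ := hH₁.add_mul_norm_sq_le_re_inner_map_self_of_inner_eq_zero hspan₁ hgap₁ hψv
  have hv2 : 0 < ‖v‖ ^ 2 := by positivity
  refine le_of_mul_le_mul_right ?_ hv2
  calc (a * E₀ + b * E₁ + (a * Δ₀ + b * Δ₁)) * ‖v‖ ^ 2
      = a * ((E₀ + Δ₀) * ‖v‖ ^ 2) + b * ((E₁ + Δ₁) * ‖v‖ ^ 2) := by ring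
    _ ≤ a * re ⟪v, H₀ v⟫_𝕜 + b * re ⟪v, H₁ v⟫_𝕜 := by gcongr
    _ = μ * ‖v‖ ^ 2 := by rw [← hsplit, hRayleigh]

end Interpolation

theorem linear_interpolation_gapped_general
    {V : Type*} [NormedAddCommGroup V] [InnerProductSpace ℂ V]
    [FiniteDimensional ℂ V]
    (H₀ H₁ : Module.End ℂ V)
    (hH₀ : H₀.IsSymmetric) (hH₁ : H₁.IsSymmetric)
    (ψ : V) (hψ : ‖ψ‖ = 1)
    (E₀ E₁ Δ₀ Δ₁ : ℝ) (hΔ₀ : 0 < Δ₀) (hΔ₁ : 0 < Δ₁)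
    (hspan₀ : H₀.eigenspace (E₀ : ℂ) = Submodule.span ℂ {ψ})
    (hspan₁ : H₁.eigenspace (E₁ : ℂ) = Submodule.span ℂ {ψ})
    (hgap₀ : ∀ μ : ℝ, H₀.HasEigenvalue (μ : ℂ) → μ ≠ E₀ → E₀ + Δ₀ ≤ μ)
    (hgap₁ : ∀ μ : ℝ, H₁.HasEigenvalue (μ : ℂ) → μ ≠ E₁ → E₁ + Δ₁ ≤ μ) :
    ∀ t : ℝ, t ∈ Set.Icc (0 : ℝ) 1 →
      (((1 - t : ℝ) : ℂ) • H₀ + ((t : ℝ) : ℂ) • H₁) ψ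
          = (((1 - t) * E₀ + t * E₁ : ℝ) : ℂ) • ψ ∧
      (((1 - t : ℝ) : ℂ) • H₀ + ((t : ℝ) : ℂ) • H₁).HasEigenvalue
          (((1 - t) * E₀ + t * E₁ : ℝ) : ℂ) ∧
      (∀ μ : ℝ,
        (((1 - t : ℝ) : ℂ) • H₀ + ((t : ℝ) : ℂ) • H₁).HasEigenvalue (μ : ℂ) →
        (1 - t) * E₀ + t * E₁ ≤ μ) ∧
      (∀ μ : ℝ,
        (((1 - t : ℝ) : ℂ) • H₀ + ((t : ℝ) : ℂ) • H₁).HasEigenvalue (μ : ℂ) →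
        μ ≠ (1 - t) * E₀ + t * E₁ →
        (1 - t) * E₀ + t * E₁ + ((1 - t) * Δ₀ + t * Δ₁) ≤ μ) := by
  intro t ⟨ht0, ht1⟩
  have hψ_eig := add_smul_apply_eq_smul_of_apply_eq_smul
    (apply_eq_smul_of_eigenspace_eq_span hspan₀) (apply_eq_smul_of_eigenspace_eq_span hspan₁)
    (1 - t) t
  have hgap : ∀ μ : ℝ,
      (((1 - t : ℝ) : ℂ) • H₀ + ((t : ℝ) : ℂ) • H₁).HasEigenvalue (μ : ℂ) →
      μ ≠ (1 - t) * E₀ + t * E₁ → (1 - t) * E₀ + t * E₁ + ((1 - t) * Δ₀ + t * Δ₁) ≤ μ :=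
    fun _ hμ hne => add_le_of_hasEigenvalue_ofReal_smul_add hH₀ hH₁ hspan₀ hspan₁ hgap₀ hgap₁
      (sub_nonneg.mpr ht1) ht0 hμ hne
  have hψ0 : ψ ≠ 0 := norm_ne_zero_iff.mp (hψ ▸ one_ne_zero)
  refine ⟨hψ_eig, hasEigenvalue_of_hasEigenvector ⟨mem_eigenspace_iff.mpr hψ_eig, hψ0⟩,
    fun μ hμ => ?_, hgap⟩
  rcases eq_or_ne μ ((1 - t) * E₀ + t * E₁) with rfl | hne
  · exact le_rfl
  · have : 0 ≤ (1 - t) * Δ₀ + t * Δ₁ := by nlinarith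
    linarith [hgap μ hμ hne]

/-- Let `H₀`, `H₁` be self-adjoint operators on a finite-dimensional complex
inner product space `V` and `ψ` a unit vector that is a common eigenvector
with eigenvalues `E₀`, `E₁`, spanning the corresponding eigenspaces, such
that every other eigenvalue of `Hᵢ` is at least `Eᵢ + Δᵢ` with `Δᵢ > 0`.
Then for every `t ∈ [0,1]`, `ψ` is an eigenvector of
`H_t = (1-t)H₀ + tH₁` with eigenvalue `E_t = (1-t)E₀ + tE₁`, this is the
smallest eigenvalue of `H_t`, and every other eigenvalue of `H_t` is at
least `E_t + (1-t)Δ₀ + tΔ₁`. -/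
theorem linear_interpolation_gapped
    {V : Type*} [NormedAddCommGroup V] [InnerProductSpace ℂ V]
    [FiniteDimensional ℂ V]
    (H₀ H₁ : Module.End ℂ V)
    (hH₀ : H₀.IsSymmetric) (hH₁ : H₁.IsSymmetric)
    (ψ : V) (hψ : ‖ψ‖ = 1)
    (E₀ E₁ Δ₀ Δ₁ : ℝ) (hΔ₀ : 0 < Δ₀) (hΔ₁ : 0 < Δ₁)
    (heig₀ : H₀ ψ = (E₀ : ℂ) • ψ) (heig₁ : H₁ ψ = (E₁ : ℂ) • ψ)
    (hspan₀ : H₀.eigenspace (E₀ : ℂ) = Submodule.span ℂ {ψ})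
    (hspan₁ : H₁.eigenspace (E₁ : ℂ) = Submodule.span ℂ {ψ})
    (hgap₀ : ∀ μ : ℝ, H₀.HasEigenvalue (μ : ℂ) → μ ≠ E₀ → E₀ + Δ₀ ≤ μ)
    (hgap₁ : ∀ μ : ℝ, H₁.HasEigenvalue (μ : ℂ) → μ ≠ E₁ → E₁ + Δ₁ ≤ μ) :
    ∀ t : ℝ, t ∈ Set.Icc (0 : ℝ) 1 →
      (((1 - t : ℝ) : ℂ) • H₀ + ((t : ℝ) : ℂ) • H₁) ψ
          = (((1 - t) * E₀ + t * E₁ : ℝ) : ℂ) • ψ ∧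
      (((1 - t : ℝ) : ℂ) • H₀ + ((t : ℝ) : ℂ) • H₁).HasEigenvalue
          (((1 - t) * E₀ + t * E₁ : ℝ) : ℂ) ∧
      (∀ μ : ℝ,
        (((1 - t : ℝ) : ℂ) • H₀ + ((t : ℝ) : ℂ) • H₁).HasEigenvalue (μ : ℂ) →
        (1 - t) * E₀ + t * E₁ ≤ μ) ∧
      (∀ μ : ℝ,
        (((1 - t : ℝ) : ℂ) • H₀ + ((t : ℝ) : ℂ) • H₁).HasEigenvalue (μ : ℂ) →
        μ ≠ (1 - t) * E₀ + t * E₁ →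
        (1 - t) * E₀ + t * E₁ + ((1 - t) * Δ₀ + t * Δ₁) ≤ μ) :=
  linear_interpolation_gapped_general H₀ H₁ hH₀ hH₁ ψ hψ E₀ E₁ Δ₀ Δ₁ hΔ₀ hΔ₁ hspan₀ hspan₁ hgap₀
    hgap₁
end
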